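/- With notation as in the lifted connection construction, A is locally symmetric (∇R = 0) if and only if B is locally symmetric (∇^B R^B = 0). -/

import Mathlib

/-!
Identify `𝔤* ⋉ 𝔤*` with the scalar extension `𝔤* ⊗ ℝ[ε]` of `𝔤*` to the dual numbers, `(α, β) ↦ β + ε α`:
the lifted bracket and the lifted connection `B` are then just the bracket and `A` extended `ℝ[ε]`-bilinearly.
So are `R^B` and `∇^B R^B`, being built multilinearly from them. Since `ε² = 0`, the `ε`-free part of
`∇^B R^B` is `∇R` evaluated on the `ε`-free parts, and its `ε`-part is a sum of values of `∇R`.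
-/

namespace BilinearConnection

variable {K M : Type*} [CommSemiring K] [AddCommGroup M] [Module K M]

def curvature (br A : M →ₗ[K] M →ₗ[K] M) (x y z : M) : M :=
  A x (A y z) - A y (A x z) - A (br x y) z

def covDerivCurvature (br A : M →ₗ[K] M →ₗ[K] M) (w x y z : M) : M :=
  A w (curvature br A x y z) - curvature br A (A w x) y z - curvature br A x (A w y) z -
    curvature br A x y (A w z)

/-- The extension of `f` to `M ⊗ K[ε]`, with `(a, b)` standing for `b + ε a`. -/
def dualLift (f : M →ₗ[K] M →ₗ[K] M) : M × M →ₗ[K] M × M →ₗ[K] M × M :=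
  LinearMap.mk₂ K (fun p q => (f p.1 q.2 + f p.2 q.1, f p.2 q.2))
    (fun p p' q => Prod.ext
      (by simp only [Prod.fst_add, Prod.snd_add, map_add, LinearMap.add_apply]; abel) (by simp))
    (fun c p q => Prod.ext (by simp [smul_add]) (by simp))
    (fun p q q' => Prod.ext (by simp only [Prod.fst_add, Prod.snd_add, map_add]; abel) (by simp))
    (fun c p q => Prod.ext (by simp [smul_add]) (by simp))

@[simp]
theorem dualLift_apply (f : M →ₗ[K] M →ₗ[K] M) (p q : M × M) :
    dualLift f p q = (f p.1 q.2 + f p.2 q.1, f p.2 q.2) :=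
  rfl

variable (br A : M →ₗ[K] M →ₗ[K] M)

theorem covDerivCurvature_dualLift (p q r s : M × M) :
    covDerivCurvature (dualLift br) (dualLift A) p q r s =
      (covDerivCurvature br A p.2 q.2 r.2 s.1 + covDerivCurvature br A p.2 q.2 r.1 s.2 +
          covDerivCurvature br A p.2 q.1 r.2 s.2 + covDerivCurvature br A p.1 q.2 r.2 s.2,
        covDerivCurvature br A p.2 q.2 r.2 s.2) := by
  ext <;> simp only [covDerivCurvature, curvature, dualLift_apply, Prod.fst_sub, Prod.snd_sub,
    map_add, map_sub, LinearMap.add_apply]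
  · abel

theorem covDerivCurvature_dualLift_eq_zero_iff :
    (∀ p q r s, covDerivCurvature (dualLift br) (dualLift A) p q r s = 0) ↔
      ∀ w x y z, covDerivCurvature br A w x y z = 0 := by
  simp only [covDerivCurvature_dualLift, Prod.ext_iff, Prod.fst_zero, Prod.snd_zero]
  refine ⟨fun h w x y z => (h (0, w) (0, x) (0, y) (0, z)).2, fun h p q r s => ?_⟩
  simp [h]

end BilinearConnection

/-- `A` is locally symmetric (`∇R = 0`) if and only if the lifted connection
`B` on `𝔤* ⋉ 𝔤*` is locally symmetric (`∇^B R^B = 0`). -/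
theorem lifted_connection_locally_symmetric_iff
    (L : Type*) [LieRing L] [LieAlgebra ℝ L]
    (A : L →ₗ[ℝ] L →ₗ[ℝ] L) :
    let R : L → L → L → L :=
      fun α β γ => A α (A β γ) - A β (A α γ) - A ⁅α, β⁆ γ
    let nablaR : L → L → L → L → L :=
      fun α β γ δ =>
        A α (R β γ δ) - R (A α β) γ δ - R β (A α γ) δ - R β γ (A α δ)
    let br : L × L → L × L → L × L :=
      fun p q => (⁅p.1, q.2⁆ + ⁅p.2, q.1⁆, ⁅p.2, q.2⁆)
    let B : L × L → L × L → L × L :=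
      fun p q => (A p.1 q.2 + A p.2 q.1, A p.2 q.2)
    let RB : L × L → L × L → L × L → L × L :=
      fun p q r => B p (B q r) - B q (B p r) - B (br p q) r
    let nablaRB : L × L → L × L → L × L → L × L → L × L :=
      fun p q r s =>
        B p (RB q r s) - RB (B p q) r s - RB q (B p r) s - RB q r (B p s)
    ((∀ α β γ δ : L, nablaR α β γ δ = 0) ↔
      (∀ p q r s : L × L, nablaRB p q r s = 0)) := by
  intro R nablaR br B RB nablaRB
  have hR : nablaR = BilinearConnection.covDerivCurvature (LieAlgebra.ad ℝ L) A := rfl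
  have hRB : nablaRB = BilinearConnection.covDerivCurvature
      (BilinearConnection.dualLift (LieAlgebra.ad ℝ L)) (BilinearConnection.dualLift A) := rfl
  rw [hR, hRB, BilinearConnection.covDerivCurvature_dualLift_eq_zero_iff]
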